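/- (Composing/Decomposing Theorem) Let p be a principal all of whose rules arise from a locally collision free set S, i.e., (p, v, p_a, k_a) ∈ R implies there exist i ∈ C ∪ D and (x_1,…,x_m) ∈ S with v = x_i and k_a = {(p_a, x_j) : j ∈ W_i}. Let F_p be the maximal fixed set with F_p ⊆ Im(S). Then p is composing/decomposing with respect to the stage ordering ≺_p: every rule of p restricted away from F_p is either composing (when i ∈ C) or decomposing (when i ∈ D), and the image of the composing rules {v : ∃x, x ≺_p v} is contained in Im(S). -/

import Mathlib

/-!
Every element outside `S_∞` lies in `Im(S)`, and `V − S_∞` is fixed: a composing rule for an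
element that never appears must have a body element that never appears, and a decomposing rule for
`x i` contains `x h` with `h ∈ C`, `i ∈ W h`, whose appearance would force `x i` to appear first.
Hence `V − S_∞ ⊆ F_p`, so every element outside `F_p` has a first stage. Local collision freeness
makes the body of a composing rule for `x i` independent of the rule, so it lies in the stage just
before the first stage of `x i`; this gives the composing part. A decomposing rule for `x i`
cannot have all its body below `x i` (its composing partner `x h` would be both below and above
`x i`), so the only rule for `x h` with body below `x h` is a composing one, which contains `x i`.
-/

variable {V : Type*} {m : ℕ}

def ImS (S : Set (Fin m → V)) (C : Set (Fin m)) : Set V :=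
  {v | ∃ i ∈ C, ∃ x ∈ S, x i = v}

def Stage (S : Set (Fin m → V)) (C : Set (Fin m)) (W : Fin m → Set (Fin m)) :
    ℕ → Set V
  | 0 => (ImS S C)ᶜ
  | n + 1 => Stage S C W n ∪
      {v | ∃ i ∈ C, ∃ x ∈ S, x i = v ∧ ∀ j ∈ W i, x j ∈ Stage S C W n}

def SInf (S : Set (Fin m → V)) (C : Set (Fin m)) (W : Fin m → Set (Fin m)) : Set V :=
  ⋃ n, Stage S C W n

def precS (S : Set (Fin m → V)) (C : Set (Fin m)) (W : Fin m → Set (Fin m))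
    (v w : V) : Prop :=
  ∃ a b : ℕ, a < b ∧
    v ∈ Stage S C W a ∧ (∀ k < a, v ∉ Stage S C W k) ∧
    w ∈ Stage S C W b ∧ (∀ k < b, w ∉ Stage S C W k)

def ruleOf (S : Set (Fin m → V)) (C D : Set (Fin m)) (W : Fin m → Set (Fin m))
    (X : Set V) (v : V) : Prop :=
  ∃ i ∈ C ∪ D, ∃ x ∈ S, v = x i ∧ X = {u | ∃ j ∈ W i, x j = u}

def decomposingRule (S : Set (Fin m → V)) (C D : Set (Fin m))
    (W : Fin m → Set (Fin m)) (X : Set V) (x : V) : Prop :=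
  ∃ v ∈ X, precS S C W x v ∧
    ∀ X' : Set V, ruleOf S C D W X' v → (∀ u ∈ X', precS S C W u v) → x ∈ X'

/-- A set `G` is fixed for the rules arising from `S`. -/
def fixedFor (S : Set (Fin m → V)) (C D : Set (Fin m)) (W : Fin m → Set (Fin m))
    (G : Set V) : Prop :=
  ∀ X v, ruleOf S C D W X v → v ∈ G → ∃ w ∈ G, w ∈ X


section

variable {S : Set (Fin m → V)} {C D : Set (Fin m)} {W : Fin m → Set (Fin m)}

theorem Stage.monotone : Monotone (Stage S C W) :=
  monotone_nat_of_le_succ fun _ => Set.subset_union_left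

theorem apply_mem_SInf_of_mem_C {i : Fin m} (hi : i ∈ C) {x : Fin m → V} (hx : x ∈ S)
    (hW : ∀ j ∈ W i, x j ∈ SInf S C W) : x i ∈ SInf S C W := by
  have hev : ∀ᶠ n in Filter.atTop, ∀ j, j ∈ W i → x j ∈ Stage S C W n := by
    refine Filter.eventually_all.2 fun j => ?_
    by_cases hj : j ∈ W i
    · obtain ⟨n, hn⟩ := Set.mem_iUnion.1 (hW j hj)
      exact Filter.eventually_atTop.2 ⟨n, fun k hk _ => Stage.monotone hk hn⟩
    · exact Filter.Eventually.of_forall fun _ h => absurd h hj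
  obtain ⟨n, hn⟩ := hev.exists
  exact Set.mem_iUnion.2 ⟨n + 1, Or.inr ⟨i, hi, x, hx, rfl, hn⟩⟩

theorem compl_SInf_subset_ImS : (SInf S C W)ᶜ ⊆ ImS S C :=
  fun _ hv => by_contra fun hvI => hv (Set.mem_iUnion.2 ⟨0, hvI⟩)

theorem precS_of_mem_of_notMem {u v : V} {n b : ℕ} (hu : u ∈ Stage S C W n)
    (hvn : v ∉ Stage S C W n) (hvb : v ∈ Stage S C W b) : precS S C W u v := by
  classical
  have hu' : ∃ k, u ∈ Stage S C W k := ⟨n, hu⟩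
  have hv' : ∃ k, v ∈ Stage S C W k := ⟨b, hvb⟩
  have hlt : n < Nat.find hv' :=
    lt_of_not_ge fun hle => hvn (Stage.monotone hle (Nat.find_spec hv'))
  exact ⟨_, _, (Nat.find_le hu).trans_lt hlt, Nat.find_spec hu', fun _ => Nat.find_min hu',
    Nat.find_spec hv', fun _ => Nat.find_min hv'⟩

theorem precS_iff {u v : V} :
    precS S C W u v ↔ v ∈ SInf S C W ∧ ∃ n, u ∈ Stage S C W n ∧ v ∉ Stage S C W n := by
  constructor
  · rintro ⟨a, b, hab, hua, -, hvb, hvb'⟩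
    exact ⟨Set.mem_iUnion.2 ⟨b, hvb⟩, a, hua, hvb' a hab⟩
  · rintro ⟨hv, n, hun, hvn⟩
    obtain ⟨b, hvb⟩ := Set.mem_iUnion.1 hv
    exact precS_of_mem_of_notMem hun hvn hvb

theorem precS.left_mem_SInf {u v : V} (h : precS S C W u v) : u ∈ SInf S C W :=
  let ⟨_, n, hun, _⟩ := precS_iff.1 h
  Set.mem_iUnion.2 ⟨n, hun⟩

theorem precS.right_mem_ImS {u v : V} (h : precS S C W u v) : v ∈ ImS S C := by
  obtain ⟨-, n, -, hvn⟩ := precS_iff.1 h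
  by_contra hv
  exact hvn (Stage.monotone (Nat.zero_le n) hv)

theorem precS.asymm {u v : V} (huv : precS S C W u v) : ¬ precS S C W v u := by
  obtain ⟨-, n, hun, hvn⟩ := precS_iff.1 huv
  rintro hvu
  obtain ⟨-, k, hvk, huk⟩ := precS_iff.1 hvu
  rcases le_total n k with hnk | hkn
  · exact huk (Stage.monotone hnk hun)
  · exact hvn (Stage.monotone hkn hvk)

theorem precS_of_mem_C
    (hLCF2 : ∀ i ∈ C, ∀ t ∈ C, ∀ x ∈ S, ∀ y ∈ S, x i = y t → x '' (W i) = y '' (W t))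
    {i : Fin m} (hi : i ∈ C) {x : Fin m → V} (hx : x ∈ S) (hxi : x i ∈ SInf S C W)
    {j : Fin m} (hj : j ∈ W i) : precS S C W (x j) (x i) := by
  have hxi0 : x i ∉ Stage S C W 0 := not_not.2 ⟨i, hi, x, hx, rfl⟩
  obtain ⟨M, hM, hM1⟩ :=
    Nat.exists_not_and_succ_of_not_zero_of_exists hxi0 (Set.mem_iUnion.1 hxi)
  obtain ⟨t, ht, y, hy, hyx, hyW⟩ := hM1.resolve_left hM
  obtain ⟨j', hj', hyj⟩ : x j ∈ y '' W t := hLCF2 i hi t ht x hx y hy hyx.symm ▸ ⟨j, hj, rfl⟩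
  exact precS_of_mem_of_notMem (hyj ▸ hyW j' hj') hM hM1

theorem not_forall_precS_of_mem_D
    (hLCF1 : ∀ i ∈ D, ∃ h ∈ C, h ∈ W i ∧ i ∈ W h)
    (hLCF2 : ∀ i ∈ C, ∀ t ∈ C, ∀ x ∈ S, ∀ y ∈ S, x i = y t → x '' (W i) = y '' (W t))
    {i : Fin m} (hi : i ∈ D) {x : Fin m → V} (hx : x ∈ S) :
    ¬ ∀ j ∈ W i, precS S C W (x j) (x i) := fun hall => by
  obtain ⟨h, hhC, hhW, hiW⟩ := hLCF1 i hi
  have hhi := hall h hhW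
  exact hhi.asymm (precS_of_mem_C hLCF2 hhC hx hhi.left_mem_SInf hiW)

theorem fixedFor_compl_SInf
    (hLCF1 : ∀ i ∈ D, ∃ h ∈ C, h ∈ W i ∧ i ∈ W h)
    (hLCF2 : ∀ i ∈ C, ∀ t ∈ C, ∀ x ∈ S, ∀ y ∈ S, x i = y t → x '' (W i) = y '' (W t)) :
    fixedFor S C D W (SInf S C W)ᶜ := by
  rintro X v ⟨i, hi | hi, x, hx, rfl, rfl⟩ hxi
  · by_contra! hW
    exact hxi <| apply_mem_SInf_of_mem_C hi hx fun j hj =>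
      by_contra fun h => hW (x j) h ⟨j, hj, rfl⟩
  · obtain ⟨h, hhC, hhW, hiW⟩ := hLCF1 i hi
    exact ⟨x h, fun hxh => hxi (precS_of_mem_C hLCF2 hhC hx hxh hiW).left_mem_SInf,
      h, hhW, rfl⟩

theorem decomposingRule_of_mem_D
    (hLCF1 : ∀ i ∈ D, ∃ h ∈ C, h ∈ W i ∧ i ∈ W h)
    (hLCF2 : ∀ i ∈ C, ∀ t ∈ C, ∀ x ∈ S, ∀ y ∈ S, x i = y t → x '' (W i) = y '' (W t))
    {i : Fin m} (hi : i ∈ D) {x : Fin m → V} (hx : x ∈ S)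
    (hW : ∀ j ∈ W i, x j ∈ SInf S C W) :
    decomposingRule S C D W {u | ∃ j ∈ W i, x j = u} (x i) := by
  obtain ⟨h, hhC, hhW, hiW⟩ := hLCF1 i hi
  refine ⟨x h, ⟨h, hhW, rfl⟩, precS_of_mem_C hLCF2 hhC hx (hW h hhW) hiW, ?_⟩
  rintro X' ⟨i', hi' | hi', x', hx', hxx', rfl⟩ hbelow
  · exact (hLCF2 h hhC i' hi' x hx x' hx' hxx' ▸ Set.mem_image_of_mem x hiW : x i ∈ x' '' W i')
  · exact absurd (fun j hj => hxx' ▸ hbelow _ ⟨j, hj, rfl⟩)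
      (not_forall_precS_of_mem_D hLCF1 hLCF2 hi' hx')

end

theorem composing_decomposing_general
    (S : Set (Fin m → V)) (C D : Set (Fin m)) (W : Fin m → Set (Fin m))
    (hLCF1 : ∀ i ∈ D, ∃ h ∈ C, h ∈ W i ∧ i ∈ W h)
    (hLCF2 : ∀ i ∈ C, ∀ t ∈ C, ∀ x ∈ S, ∀ y ∈ S,
      x i = y t → x '' (W i) = y '' (W t))
    (Fp : Set V)
    (hFmax : ∀ G : Set V, G ⊆ ImS S C → fixedFor S C D W G → G ⊆ Fp) :
    (∀ i ∈ C ∪ D, ∀ x ∈ S, x i ∉ Fp → (∀ j ∈ W i, x j ∉ Fp) →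
      (i ∈ C → ∀ j ∈ W i, precS S C W (x j) (x i)) ∧
      (i ∈ D → decomposingRule S C D W {u | ∃ j ∈ W i, x j = u} (x i))) ∧
    {v | ∃ u, precS S C W u v} ⊆ ImS S C := by
  have hFp : (SInf S C W)ᶜ ⊆ Fp :=
    hFmax _ compl_SInf_subset_ImS (fixedFor_compl_SInf hLCF1 hLCF2)
  have hSInf : ∀ v, v ∉ Fp → v ∈ SInf S C W := fun v hv => not_not.1 fun h => hv (hFp h)
  refine ⟨fun i _ x hx hxi hW => ⟨fun hiC j hj => ?_, fun hiD => ?_⟩, fun _ ⟨_, huv⟩ => ?_⟩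
  · exact precS_of_mem_C hLCF2 hiC hx (hSInf _ hxi) hj
  · exact decomposingRule_of_mem_D hLCF1 hLCF2 hiD hx fun j hj => hSInf _ (hW j hj)
  · exact huv.right_mem_ImS

theorem composing_decomposing
    (S : Set (Fin m → V)) (C D : Set (Fin m)) (W : Fin m → Set (Fin m))
    (hLCF1 : ∀ i ∈ D, ∃ h ∈ C, h ∈ W i ∧ i ∈ W h)
    (hLCF2 : ∀ i ∈ C, ∀ t ∈ C, ∀ x ∈ S, ∀ y ∈ S,
      x i = y t → x '' (W i) = y '' (W t))
    (hCD : Disjoint C D)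
    (Fp : Set V)
    (hFsub : Fp ⊆ ImS S C)
    (hFfix : fixedFor S C D W Fp)
    (hFmax : ∀ G : Set V, G ⊆ ImS S C → fixedFor S C D W G → G ⊆ Fp) :
    (∀ i ∈ C ∪ D, ∀ x ∈ S, x i ∉ Fp → (∀ j ∈ W i, x j ∉ Fp) →
      (i ∈ C → ∀ j ∈ W i, precS S C W (x j) (x i)) ∧
      (i ∈ D → decomposingRule S C D W {u | ∃ j ∈ W i, x j = u} (x i))) ∧
    {v | ∃ u, precS S C W u v} ⊆ ImS S C :=
  composing_decomposing_general S C D W hLCF1 hLCF2 Fp hFmax
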